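/- Let S_B be a unitary d×d complex matrix (a static beam-splitter), let L_{A,1}, …, L_{A,d} and L_{B,1}, …, L_{B,d} be bounded operators and H_A, H_B bounded self-adjoint operators on a complex Hilbert space. Define 𝓛_S X = (1/2) Σ_k L_{S,k}*[X, L_{S,k}] + (1/2) Σ_k [L_{S,k}*, X] L_{S,k} − i[X, H_S] for S = A, B, and set L_k = Σ_j (S_B)_{kj} L_{A,j} + L_{B,k} (that is, L = S_B L_A + L_B). Then for every bounded operator X: 𝓛_A X + 𝓛_B X + Σ_{j,k} L_{A,j}* conj((S_B)_{kj}) [X, L_{B,k}] + Σ_{j,k} [L_{B,j}*, X] (S_B)_{jk} L_{A,k} = (1/2) Σ_k L_k*[X, L_k] + (1/2) Σ_k [L_k*, X] L_k − i[X, H_A + H_B + Im{ Σ_{j,k} L_{B,j}* (S_B)_{jk} L_{A,k} }]. -/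

import Mathlib

open scoped Matrix

/-- The "imaginary part" `Im{C} = (C − C*)/(2i)` of a bounded operator. -/
noncomputable def opIm {𝓗 : Type*} [NormedAddCommGroup 𝓗] [InnerProductSpace ℂ 𝓗]
    [CompleteSpace 𝓗] (C : 𝓗 →L[ℂ] 𝓗) : 𝓗 →L[ℂ] 𝓗 :=
  (2 * Complex.I)⁻¹ • (C - star C)

/-!
Write `L = u + L_B` with `u = S_B L_A`. The dissipator `½ Σ (L*[X, L] + [L*, X] L)` is quadratic
in `L`, so it splits into the dissipators of `u` and `L_B` plus cross terms, and the dissipator of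
`u` is that of `L_A` because `S_B` is unitary (in the form `Σ L* Y L - ½ {Σ L* L, Y}` this is
`Σ_k u_k* Y u_k = Σ_j L_{A,j}* Y L_{A,j}`). By the Leibniz rule `[X, ab] = a[X, b] + [X, a]b`, the
symmetrised cross terms differ from the one-sided ones `Σ u*[X, L_B] + Σ [L_B*, X] u` by
`½[X, T - T*]` with `T = Σ L_B* u`, and this is what the extra Hamiltonian `Im T` cancels.
-/

section Dissipator

variable {R : Type*} [Ring R] [StarRing R] [Algebra ℂ R]

noncomputable def dissipator {ι : Type*} [Fintype ι] (L : ι → R) (X : R) : R :=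
  (1/2 : ℂ) • ∑ k, star (L k) * ⁅X, L k⁆ + (1/2 : ℂ) • ∑ k, ⁅star (L k), X⁆ * L k

theorem dissipator_eq_sum_sub {ι : Type*} [Fintype ι] (L : ι → R) (X : R) :
    dissipator L X = ∑ k, star (L k) * X * L k
      - (1/2 : ℂ) • ((∑ k, star (L k) * L k) * X + X * ∑ k, star (L k) * L k) := by
  simp only [dissipator, Ring.lie_def, mul_sub, sub_mul, Finset.sum_sub_distrib, Finset.sum_mul,
    Finset.mul_sum, mul_assoc]
  module

omit [StarRing R] in
theorem Matrix.sum_star_smul_mul_sum_smul_of_conjTranspose_mul_eq_one {n : Type*} [Fintype n]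
    [DecidableEq n] {M : Matrix n n ℂ} (hM : Mᴴ * M = 1) (a b : n → R) :
    ∑ k, (∑ j, star (M k j) • a j) * (∑ j, M k j • b j) = ∑ j, a j * b j := by
  calc ∑ k, (∑ j, star (M k j) • a j) * (∑ j, M k j • b j)
      = ∑ i, ∑ j, (Mᴴ * M) i j • (a i * b j) := by
        simp only [Finset.sum_mul_sum, smul_mul_smul_comm, Matrix.mul_apply,
          Matrix.conjTranspose_apply, Finset.sum_smul]
        rw [Finset.sum_comm]
        exact Finset.sum_congr rfl fun i _ => Finset.sum_comm
    _ = ∑ j, a j * b j := by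
        simp [hM, Matrix.one_apply, ite_smul]

theorem dissipator_add {ι : Type*} [Fintype ι] (u v : ι → R) (X : R) :
    dissipator (fun k => u k + v k) X = dissipator u X + dissipator v X
      + ∑ k, star (u k) * ⁅X, v k⁆ + ∑ k, ⁅star (v k), X⁆ * u k
      + (1/2 : ℂ) • ⁅X, ∑ k, star (v k) * u k - star (∑ k, star (v k) * u k)⁆ := by
  simp only [dissipator, star_add, star_sum, star_mul, star_star, Ring.lie_def, add_mul, mul_add,
    sub_mul, mul_sub, Finset.sum_add_distrib, Finset.sum_sub_distrib, Finset.mul_sum,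
    Finset.sum_mul, mul_assoc]
  module

variable [StarModule ℂ R]

theorem Matrix.sum_star_mul_mul_of_conjTranspose_mul_eq_one {n : Type*} [Fintype n]
    [DecidableEq n] {M : Matrix n n ℂ} (hM : Mᴴ * M = 1) (L : n → R) (Y : R) :
    ∑ k, star (∑ j, M k j • L j) * Y * (∑ j, M k j • L j) = ∑ j, star (L j) * Y * L j := by
  have h (k : n) : star (∑ j, M k j • L j) * Y = ∑ j, star (M k j) • (star (L j) * Y) := by
    simp only [star_sum, star_smul, Finset.sum_mul, smul_mul_assoc]
  simp only [h]
  exact Matrix.sum_star_smul_mul_sum_smul_of_conjTranspose_mul_eq_one hM _ _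

theorem dissipator_sum_smul_of_conjTranspose_mul_eq_one {n : Type*} [Fintype n] [DecidableEq n]
    {M : Matrix n n ℂ} (hM : Mᴴ * M = 1) (L : n → R) (X : R) :
    dissipator (fun k => ∑ j, M k j • L j) X = dissipator L X := by
  have h := Matrix.sum_star_mul_mul_of_conjTranspose_mul_eq_one hM L
  have h₁ : ∑ k, star (∑ j, M k j • L j) * (∑ j, M k j • L j) = ∑ j, star (L j) * L j := by
    simpa only [mul_one] using h 1
  rw [dissipator_eq_sum_sub, dissipator_eq_sum_sub, h X, h₁]

end Dissipator

theorem I_smul_lie_opIm {𝓗 : Type*} [NormedAddCommGroup 𝓗] [InnerProductSpace ℂ 𝓗]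
    [CompleteSpace 𝓗] (X T : 𝓗 →L[ℂ] 𝓗) :
    Complex.I • ⁅X, opIm T⁆ = (1/2 : ℂ) • ⁅X, T - star T⁆ := by
  have h : Complex.I * (2 * Complex.I)⁻¹ = 1/2 := by field_simp
  simp only [opIm, Ring.lie_def, mul_smul_comm, smul_mul_assoc, ← smul_sub, smul_smul, h]

theorem series_product_with_static_beamsplitter_general
    {𝓗 : Type*} [NormedAddCommGroup 𝓗] [InnerProductSpace ℂ 𝓗] [CompleteSpace 𝓗]
    {d : ℕ} (SB : Matrix (Fin d) (Fin d) ℂ) (hSB1 : SBᴴ * SB = 1)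
    (LA LB : Fin d → 𝓗 →L[ℂ] 𝓗) (HA HB : 𝓗 →L[ℂ] 𝓗)
    (L : Fin d → 𝓗 →L[ℂ] 𝓗)
    (hL : ∀ k, L k = (∑ j, SB k j • LA j) + LB k) :
    ∀ X : 𝓗 →L[ℂ] 𝓗,
      ((1/2 : ℂ) • ∑ k, star (LA k) * ⁅X, LA k⁆
        + (1/2 : ℂ) • ∑ k, ⁅star (LA k), X⁆ * LA k - Complex.I • ⁅X, HA⁆)
      + ((1/2 : ℂ) • ∑ k, star (LB k) * ⁅X, LB k⁆
        + (1/2 : ℂ) • ∑ k, ⁅star (LB k), X⁆ * LB k - Complex.I • ⁅X, HB⁆)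
      + ∑ j, ∑ k, starRingEnd ℂ (SB k j) • (star (LA j) * ⁅X, LB k⁆)
      + ∑ j, ∑ k, SB j k • (⁅star (LB j), X⁆ * LA k)
      = (1/2 : ℂ) • ∑ k, star (L k) * ⁅X, L k⁆
        + (1/2 : ℂ) • ∑ k, ⁅star (L k), X⁆ * L k
        - Complex.I • ⁅X, HA + HB
            + opIm (∑ j, ∑ k, SB j k • (star (LB j) * LA k))⁆ := by
  intro X
  have hcrossA : ∑ j, ∑ k, starRingEnd ℂ (SB k j) • (star (LA j) * ⁅X, LB k⁆)
      = ∑ k, star (∑ j, SB k j • LA j) * ⁅X, LB k⁆ := by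
    simp only [star_sum, star_smul, Finset.sum_mul, smul_mul_assoc, starRingEnd_apply]
    exact Finset.sum_comm
  have hcrossB : ∑ j, ∑ k, SB j k • (⁅star (LB j), X⁆ * LA k)
      = ∑ k, ⁅star (LB k), X⁆ * ∑ j, SB k j • LA j := by
    simp only [Finset.mul_sum, mul_smul_comm]
  have hT : ∑ j, ∑ k, SB j k • (star (LB j) * LA k) = ∑ k, star (LB k) * ∑ j, SB k j • LA j := by
    simp only [Finset.mul_sum, mul_smul_comm]
  show dissipator LA X - _ + (dissipator LB X - _) + _ + _ = dissipator L X - _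
  -- The bracket is `Ring.instBracket`, on which the `LieRing` API (`lie_add`, ...) does not fire.
  have hlie_add (A B : 𝓗 →L[ℂ] 𝓗) : ⁅X, A + B⁆ = ⁅X, A⁆ + ⁅X, B⁆ := by
    simp only [Ring.lie_def]; noncomm_ring
  rw [funext hL, dissipator_add, dissipator_sum_smul_of_conjTranspose_mul_eq_one hSB1,
    hcrossA, hcrossB, hT, hlie_add, hlie_add, smul_add, smul_add, I_smul_lie_opIm]
  abel

/-- **The series product with a static beam-splitter.**
Let `S_B` be a unitary `d × d` complex matrix, `L_A, L_B` bounded couplings, `H_A, H_B` bounded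
self-adjoint, and `L = S_B L_A + L_B`.  Then the open-loop Lindbladians plus the interconnection
cross terms recombine into the Lindbladian with coupling `L` and Hamiltonian
`H_A + H_B + Im{L_B* S_B L_A}`, as predicted by the series product. -/
theorem series_product_with_static_beamsplitter
    {𝓗 : Type*} [NormedAddCommGroup 𝓗] [InnerProductSpace ℂ 𝓗] [CompleteSpace 𝓗]
    {d : ℕ} (SB : Matrix (Fin d) (Fin d) ℂ) (hSB1 : SBᴴ * SB = 1) (hSB2 : SB * SBᴴ = 1)
    (LA LB : Fin d → 𝓗 →L[ℂ] 𝓗) (HA HB : 𝓗 →L[ℂ] 𝓗)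
    (hHA : IsSelfAdjoint HA) (hHB : IsSelfAdjoint HB)
    (L : Fin d → 𝓗 →L[ℂ] 𝓗)
    (hL : ∀ k, L k = (∑ j, SB k j • LA j) + LB k) :
    ∀ X : 𝓗 →L[ℂ] 𝓗,
      ((1/2 : ℂ) • ∑ k, star (LA k) * ⁅X, LA k⁆
        + (1/2 : ℂ) • ∑ k, ⁅star (LA k), X⁆ * LA k - Complex.I • ⁅X, HA⁆)
      + ((1/2 : ℂ) • ∑ k, star (LB k) * ⁅X, LB k⁆
        + (1/2 : ℂ) • ∑ k, ⁅star (LB k), X⁆ * LB k - Complex.I • ⁅X, HB⁆)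
      + ∑ j, ∑ k, starRingEnd ℂ (SB k j) • (star (LA j) * ⁅X, LB k⁆)
      + ∑ j, ∑ k, SB j k • (⁅star (LB j), X⁆ * LA k)
      = (1/2 : ℂ) • ∑ k, star (L k) * ⁅X, L k⁆
        + (1/2 : ℂ) • ∑ k, ⁅star (L k), X⁆ * L k
        - Complex.I • ⁅X, HA + HB
            + opIm (∑ j, ∑ k, SB j k • (star (LB j) * LA k))⁆ :=
  series_product_with_static_beamsplitter_general SB hSB1 LA LB HA HB L hL
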